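/- For every n ≥ 1, the reflexive–transitive closure ≤ of the relation ⇀ on X_n is antisymmetric, hence a partial order on X_n; moreover ⇀ is exactly the covering relation of ≤ (u ⇀ w iff u < w and there is no v with u < v < w), and the identity signed permutation 1 2 ⋯ n is the minimum element of (X_n, ≤): id ≤ w for all w ∈ X_n. -/

import Mathlib

open scoped Classical

/-- A signed permutation of length `n`: a permutation `w` of `ℤ` with
`w(-i) = -w(i)` that fixes every integer of absolute value greater than `n`. -/
def IsSignedPerm (n : ℕ) (w : Equiv.Perm ℤ) : Prop :=
  (∀ i : ℤ, w (-i) = - w i) ∧ ∀ i : ℤ, (n : ℤ) < |i| → w i = i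

/-- Membership in `X_n := {w ∈ 𝔅_n : w⁻¹(1) > 0}`. -/
def InXn (n : ℕ) (w : Equiv.Perm ℤ) : Prop :=
  IsSignedPerm n w ∧ 0 < w.symm 1

/-- The type B descent number `des_B(w) = #{i ∈ {0,…,n-1} : w_i > w_{i+1}}`,
with the convention `w_0 = 0` (automatic, since a signed permutation fixes `0`). -/
noncomputable def desB (n : ℕ) (w : Equiv.Perm ℤ) : ℕ :=
  ((Finset.range n).filter fun i => w ((i : ℤ) + 1) < w (i : ℤ)).card

/-- The flag-excedance `fexc(w) = 2·#{i : w_i > i} + #{i : w_i < 0}`. -/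
noncomputable def fexc (n : ℕ) (w : Equiv.Perm ℤ) : ℕ :=
  2 * ((Finset.Icc (1 : ℤ) (n : ℤ)).filter fun i => i < w i).card
    + ((Finset.Icc (1 : ℤ) (n : ℤ)).filter fun i => w i < 0).card

/-- The cyclic successor on `{-n,…,-1,1,…,n}` (with `(-1)⁺ = 1` and `n⁺ = -n`). -/
def csucc (n : ℕ) (i : ℤ) : ℤ :=
  if i = -1 then 1 else if i = (n : ℤ) then -(n : ℤ) else i + 1

/-- The circular descent set `CDes(w) = {i ∈ {-n,…,-1,1,…,n} : w(i) > w(i⁺)}`. -/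
noncomputable def cdesSet (n : ℕ) (w : Equiv.Perm ℤ) : Finset ℤ :=
  (Finset.Icc (-(n : ℤ)) (n : ℤ)).filter fun i => i ≠ 0 ∧ w (csucc n i) < w i

/-- The circular descent number `cdes(w) = |CDes(w)|`. -/
noncomputable def cdes (n : ℕ) (w : Equiv.Perm ℤ) : ℕ := (cdesSet n w).card

/-- `a ≪ b`: there is a nonzero integer strictly between `a` and `b`. -/
def Lll (a b : ℤ) : Prop := ∃ c : ℤ, c ≠ 0 ∧ a < c ∧ c < b

/-- The big ascent number `basc(w) = |BAsc(w)|`, where `BAsc(w) ⊆ {-1,1,…,n}`: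
`-1 ∈ BAsc(w)` iff `w_1 ≥ 2`; for `1 ≤ i ≤ n-1`, `i ∈ BAsc(w)` iff `w_i ≪ w_{i+1}`;
and `n ∈ BAsc(w)` iff `w_n ≤ -2`. -/
noncomputable def basc (n : ℕ) (w : Equiv.Perm ℤ) : ℕ :=
  ((insert (-1 : ℤ) (Finset.Icc (1 : ℤ) (n : ℤ))).filter fun i =>
    if i = -1 then 2 ≤ w 1
    else if i = (n : ℤ) then w (n : ℤ) ≤ -2
    else Lll (w i) (w (i + 1))).card

/-- `L'_{n,k}(r)`: the number of half-integer points in the `r`-th dilate of the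
half-open type C hypersimplex `Δ'_{C_n,k}`, in the `y`-coordinates. -/
noncomputable def Lp (n k r : ℕ) : ℕ :=
  if k = 1 then
    Set.ncard {y : Fin n → ℤ |
      (∀ j, 0 ≤ y j ∧ y j ≤ 2 * (r : ℤ)) ∧ (∀ j : Fin n, (j : ℕ) = 0 → y j ≤ (r : ℤ)) ∧
      0 ≤ ∑ j, y j ∧ ∑ j, y j ≤ (r : ℤ)}
  else
    Set.ncard {y : Fin n → ℤ |
      (∀ j, 0 ≤ y j ∧ y j ≤ 2 * (r : ℤ)) ∧ (∀ j : Fin n, (j : ℕ) = 0 → y j ≤ (r : ℤ)) ∧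
      ((k : ℤ) - 1) * r < ∑ j, y j ∧ ∑ j, y j ≤ (k : ℤ) * r}

/-- `L_{n,k}(r)`: the number of half-integer points in the `r`-th dilate of the
closed type C hypersimplex `Δ_{C_n,k}`, in the `y`-coordinates. -/
noncomputable def Lc (n k r : ℕ) : ℕ :=
  Set.ncard {y : Fin n → ℤ |
    (∀ j, 0 ≤ y j ∧ y j ≤ 2 * (r : ℤ)) ∧ (∀ j : Fin n, (j : ℕ) = 0 → y j ≤ (r : ℤ)) ∧
    ((k : ℤ) - 1) * r ≤ ∑ j, y j ∧ ∑ j, y j ≤ (k : ℤ) * r}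

/-- `ψ_{n,k} = #{w ∈ X_n : basc(w) = k}`. -/
noncomputable def psiN (n k : ℕ) : ℕ :=
  {w : Equiv.Perm ℤ | InXn n w ∧ basc n w = k}.ncard

/-- `ψ_{n,k}` with an integer index (`0` for negative `k`). -/
noncomputable def psiZ (n : ℕ) (k : ℤ) : ℕ :=
  {w : Equiv.Perm ℤ | InXn n w ∧ (basc n w : ℤ) = k}.ncard

/-- `Ψ_{C_n}(t) = Σ_k ψ_{n,k} t^k ∈ ℤ[t]`. -/
noncomputable def PsiC (n : ℕ) : Polynomial ℤ :=
  ∑ᶠ k : ℕ, (psiN n k : Polynomial ℤ) * Polynomial.X ^ k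

/-- `Ψ_{C_n}(t)` with rational coefficients. -/
noncomputable def PsiCQ (n : ℕ) : Polynomial ℚ :=
  ∑ᶠ k : ℕ, (psiN n k : Polynomial ℚ) * Polynomial.X ^ k

/-- The descent number of a permutation of `{1,…,m}`. -/
noncomputable def desA (m : ℕ) (σ : Equiv.Perm (Fin m)) : ℕ :=
  (Finset.univ.filter fun i : Fin m =>
    ∃ h : (i : ℕ) + 1 < m, σ ⟨(i : ℕ) + 1, h⟩ < σ i).card

/-- The classical (type A) Eulerian polynomial `E_m^A(t) = Σ_{σ ∈ S_m} t^{des σ}`. -/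
noncomputable def EulerianA (m : ℕ) : Polynomial ℚ :=
  ∑ σ : Equiv.Perm (Fin m), Polynomial.X ^ desA m σ

/-- The relation `u ⇀ w` on `X_n`. -/
def covRel (n : ℕ) (u w : Equiv.Perm ℤ) : Prop :=
  InXn n u ∧ InXn n w ∧
    ((2 ≤ w 1 ∧ u = w * Equiv.swap (1 : ℤ) (-1)) ∨
     (∃ i : ℤ, 1 ≤ i ∧ i ≤ (n : ℤ) - 1 ∧ Lll (w i) (w (i + 1)) ∧
        u = w * (Equiv.swap i (i + 1) * Equiv.swap (-i) (-(i + 1)))) ∨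
     (w (n : ℤ) ≤ -2 ∧ u = w * Equiv.swap (n : ℤ) (-(n : ℤ))))

/-- The `i`-th coordinate (`1 ≤ i ≤ n`) of the vertex `v^j(w)` (`1 ≤ j ≤ n+1`):
`v^{n+1}_i(w) = #({1,…,i-1} ∩ CDes(w⁻¹))` and `v^j = v^{j+1} + ½ e_{w_j}`. -/
noncomputable def vcoord (n : ℕ) (w : Equiv.Perm ℤ) (j : ℕ) (i : ℕ) : ℚ :=
  ((Finset.Icc (1 : ℤ) ((i : ℤ) - 1) ∩ cdesSet n w.symm).card : ℚ)
    + (1 / 2) * ∑ m ∈ Finset.Icc (j : ℤ) (n : ℤ),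
        (if w m = (i : ℤ) then (1 : ℚ) else if w m = -(i : ℤ) then -1 else 0)

/-- `u` is the image `τ_n(w)`: in window notation `u = 1 w'_1 ⋯ w'_n`, where
`w'_i = w_i + 1` if `w_i > 0` and `w'_i = w_i - 1` if `w_i < 0`. -/
def isTau (n : ℕ) (w u : Equiv.Perm ℤ) : Prop :=
  u 1 = 1 ∧ ∀ i : ℤ, 1 ≤ i → i ≤ (n : ℤ) →
    u (i + 1) = if 0 < w i then w i + 1 else w i - 1

/-!
`xnRank` is a rank function for `⇀`: each of the three moves lowers it by exactly one. The
pair weights count ascending pairs of the window, corrected on entries of consecutive absolute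
value, which is what the two sign changes at the ends of the window require. A strictly
increasing rank forces antisymmetry, and a rank that goes up by exactly one along `⇀` makes `⇀`
the covering relation. Finally, a `w ∈ X_n` with none of the three moves available is the
identity (its window is positive, starts at `1` and never jumps by more than one), and `xnRank`
is bounded below on `X_n`, so descending from any `w` ends at the identity.
-/

open Finset

namespace Relation

variable {α β : Type*} [Preorder β] {r : α → α → Prop} {ρ : α → β}

theorem ReflTransGen.eq_or_lt_of_strictMono (hρ : ∀ ⦃a b⦄, r a b → ρ a < ρ b) {a b : α}
    (h : ReflTransGen r a b) : a = b ∨ ρ a < ρ b := by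
  induction h with
  | refl => exact .inl rfl
  | tail _ hcb ih =>
    rcases ih with rfl | hlt
    · exact .inr (hρ hcb)
    · exact .inr (hlt.trans (hρ hcb))

theorem ReflTransGen.antisymm_of_strictMono (hρ : ∀ ⦃a b⦄, r a b → ρ a < ρ b) {a b : α}
    (hab : ReflTransGen r a b) (hba : ReflTransGen r b a) : a = b := by
  rcases hab.eq_or_lt_of_strictMono hρ with h | hlt
  · exact h
  rcases hba.eq_or_lt_of_strictMono hρ with h | hlt'
  · exact h.symm
  · exact absurd (hlt.trans hlt') (lt_irrefl _)

theorem iff_covering_of_covBy (hρ : ∀ ⦃a b⦄, r a b → ρ a ⋖ ρ b) {a b : α} :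
    r a b ↔ (ReflTransGen r a b ∧ a ≠ b) ∧
      ¬ ∃ c, (ReflTransGen r a c ∧ a ≠ c) ∧ (ReflTransGen r c b ∧ c ≠ b) := by
  have hlt : ∀ ⦃a b⦄, r a b → ρ a < ρ b := fun _ _ h => (hρ h).lt
  constructor
  · intro hab
    refine ⟨⟨.single hab, fun h => (hρ hab).lt.ne (congrArg ρ h)⟩, ?_⟩
    rintro ⟨c, ⟨hac, hac'⟩, hcb, hcb'⟩
    have hac := (hac.eq_or_lt_of_strictMono hlt).resolve_left hac'
    have hcb := (hcb.eq_or_lt_of_strictMono hlt).resolve_left hcb'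
    exact (hρ hab).2 hac hcb
  · rintro ⟨⟨hab, hne⟩, hmin⟩
    rcases hab.cases_head with rfl | ⟨c, hac, hcb⟩
    · exact absurd rfl hne
    by_cases hcb' : c = b
    · exact hcb' ▸ hac
    refine absurd ⟨c, ⟨.single hac, fun h => ?_⟩, hcb, hcb'⟩ hmin
    exact (hlt hac).ne (congrArg ρ h)

theorem ReflTransGen.of_forall_exists_rel {ρ : α → ℤ} (hρ : ∀ ⦃a b⦄, r a b → ρ a < ρ b)
    {S : Set α} (hS : BddBelow (ρ '' S)) {m : α} (hpred : ∀ b ∈ S, b ≠ m → ∃ a ∈ S, r a b) :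
    ∀ b ∈ S, ReflTransGen r m b := by
  obtain ⟨B, hB⟩ := hS
  intro b hb
  induction hk : (ρ b - B).toNat using Nat.strong_induction_on generalizing b with
  | _ k ih =>
    by_cases hbm : b = m
    · exact hbm ▸ .refl
    obtain ⟨a, ha, hab⟩ := hpred b hb hbm
    have hBa : B ≤ ρ a := hB ⟨a, ha, rfl⟩
    exact (ih _ (by have := hρ hab; omega) a ha rfl).tail hab

end Relation

namespace IsSignedPerm

variable {n : ℕ} {w σ : Equiv.Perm ℤ}

theorem map_zero (hw : IsSignedPerm n w) : w 0 = 0 := by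
  have := hw.1 0
  rw [neg_zero] at this
  omega

theorem map_ne_zero (hw : IsSignedPerm n w) {i : ℤ} (hi : i ≠ 0) : w i ≠ 0 :=
  fun h => hi (w.injective (h.trans hw.map_zero.symm))

theorem symm (hw : IsSignedPerm n w) : IsSignedPerm n w.symm := by
  refine ⟨fun i => ?_, fun i hi => ?_⟩
  · rw [Equiv.symm_apply_eq, hw.1, Equiv.apply_symm_apply]
  · rw [Equiv.symm_apply_eq, hw.2 i hi]

theorem abs_apply_abs (hw : IsSignedPerm n w) (i : ℤ) : |w (|i|)| = |w i| := by
  rcases abs_choice i with h | h <;> rw [h]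
  rw [hw.1, abs_neg]

theorem abs_apply_le (hw : IsSignedPerm n w) {i : ℤ} (hi : |i| ≤ n) : |w i| ≤ n := by
  by_contra! h
  have : w i = i := w.injective (hw.2 (w i) h)
  rw [this] at h
  omega

theorem abs_le_of_apply_ne (hw : IsSignedPerm n w) {i : ℤ} (hi : w i ≠ i) : |i| ≤ n :=
  not_lt.1 fun h => hi (hw.2 i h)

theorem mul (hw : IsSignedPerm n w) (hσ : IsSignedPerm n σ) : IsSignedPerm n (w * σ) :=
  ⟨fun i => by simp only [Equiv.Perm.mul_apply, hσ.1, hw.1],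
    fun i hi => by simp only [Equiv.Perm.mul_apply, hσ.2 i hi, hw.2 i hi]⟩

theorem eq_one_of_forall_apply_eq_self (hw : IsSignedPerm n w)
    (h : ∀ q : ℤ, 1 ≤ q → q ≤ n → w q = q) : w = 1 := by
  ext x
  rw [Equiv.Perm.one_apply]
  by_cases hx : (n : ℤ) < |x|
  · exact hw.2 x hx
  rw [not_lt, abs_le] at hx
  rcases lt_trichotomy x 0 with hneg | rfl | hpos
  · rw [← neg_neg x, hw.1, h (-x) (by omega) (by omega)]
  · exact hw.map_zero
  · exact h x hpos hx.2

theorem abs_symm_apply_abs_apply (hw : IsSignedPerm n w) {q : ℤ} (hq : 0 ≤ q) :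
    |w.symm (|w q|)| = q := by
  rw [hw.symm.abs_apply_abs, Equiv.symm_apply_apply, abs_of_nonneg hq]

theorem abs_apply_mem_Icc (hw : IsSignedPerm n w) {q : ℤ} (hq : q ∈ Icc 1 (n : ℤ)) :
    |w q| ∈ Icc 1 (n : ℤ) := by
  rw [mem_Icc] at hq ⊢
  exact ⟨Int.one_le_abs (hw.map_ne_zero (by omega)), hw.abs_apply_le (by rw [abs_le]; omega)⟩

theorem abs_apply_mem_erase (hw : IsSignedPerm n w) {k q : ℤ} (hk : k ∈ Icc 1 (n : ℤ))
    (hq : q ∈ (Icc 1 (n : ℤ)).erase k) : |w q| ∈ (Icc 1 (n : ℤ)).erase |w k| := by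
  obtain ⟨hqk, hq⟩ := mem_erase.1 hq
  refine mem_erase.2 ⟨fun h => hqk ?_, hw.abs_apply_mem_Icc hq⟩
  rw [mem_Icc] at hk hq
  rw [← hw.abs_symm_apply_abs_apply (by omega : 0 ≤ q), h,
    hw.abs_symm_apply_abs_apply (by omega : 0 ≤ k)]

/-- Reindexing along the bijection `q ↦ |w q|` of `{1, …, n}`. -/
theorem sum_erase_apply {f : ℤ → ℤ} (hw : IsSignedPerm n w) {k : ℤ} (hk : k ∈ Icc 1 (n : ℤ))
    (hf : ∀ m ∈ (Icc 1 (n : ℤ)).erase |w k|, f (-m) = f m) :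
    ∑ q ∈ (Icc 1 (n : ℤ)).erase k, f (w q) = ∑ m ∈ (Icc 1 (n : ℤ)).erase |w k|, f m := by
  have hk' : 0 ≤ k := by rw [mem_Icc] at hk; omega
  have habs : ∀ q ∈ (Icc 1 (n : ℤ)).erase k, f (w q) = f |w q| := fun q hq => by
    rcases abs_choice (w q) with h | h
    · rw [h]
    · rw [← hf _ (hw.abs_apply_mem_erase hk hq), h, neg_neg]
  rw [sum_congr rfl habs]
  refine sum_nbij' (fun q => |w q|) (fun m => |w.symm m|) (fun q hq => hw.abs_apply_mem_erase hk hq)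
    (fun m hm => ?_) (fun q hq => ?_) (fun m hm => ?_) (fun _ _ => rfl)
  · have := hw.symm.abs_apply_mem_erase (hw.abs_apply_mem_Icc hk) hm
    rwa [hw.abs_symm_apply_abs_apply hk'] at this
  · rw [mem_erase, mem_Icc] at hq
    exact hw.abs_symm_apply_abs_apply (by omega)
  · rw [mem_erase, mem_Icc] at hm
    rw [hw.abs_apply_abs, Equiv.apply_symm_apply, abs_of_nonneg (by omega)]

end IsSignedPerm

theorem isSignedPerm_swap_neg {n : ℕ} {a : ℤ} (ha : |a| ≤ n) :
    IsSignedPerm n (Equiv.swap a (-a)) := by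
  rw [abs_le] at ha
  refine ⟨fun i => ?_, fun i hi => ?_⟩
  · simp only [Equiv.swap_apply_def]
    split_ifs <;> omega
  · rw [lt_abs] at hi
    exact Equiv.swap_apply_of_ne_of_ne (by omega) (by omega)

theorem isSignedPerm_swap_mul_swap {n : ℕ} {i : ℤ} (hi : 1 ≤ i) (hin : i + 1 ≤ n) :
    IsSignedPerm n (Equiv.swap i (i + 1) * Equiv.swap (-i) (-(i + 1))) := by
  refine ⟨fun x => ?_, fun x hx => ?_⟩
  · simp only [Equiv.Perm.mul_apply, Equiv.swap_apply_def]
    split_ifs <;> omega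
  · rw [lt_abs] at hx
    simp only [Equiv.Perm.mul_apply, Equiv.swap_apply_def]
    split_ifs <;> omega

namespace InXn

variable {n : ℕ} {w σ : Equiv.Perm ℤ}

theorem mul (hw : InXn n w) (hσ : IsSignedPerm n σ) (h : 0 < σ.symm (w.symm 1)) :
    InXn n (w * σ) :=
  ⟨hw.1.mul hσ, by rwa [Equiv.Perm.mul_def, Equiv.symm_trans_apply]⟩

theorem apply_ne_neg_one (hw : InXn n w) {i : ℤ} (hi : 0 < i) : w i ≠ -1 := by
  intro h
  have : w.symm 1 = -i := by rw [Equiv.symm_apply_eq, hw.1.1, h, neg_neg]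
  have := hw.2
  omega

theorem mul_swap_one (hw : InXn n w) (h : 2 ≤ w 1) : InXn n (w * Equiv.swap 1 (-1)) := by
  refine hw.mul (isSignedPerm_swap_neg (hw.1.abs_le_of_apply_ne (by omega))) ?_
  have hp : w.symm 1 ≠ 1 := fun hp => by rw [Equiv.symm_apply_eq] at hp; omega
  rw [Equiv.symm_swap, Equiv.swap_apply_of_ne_of_ne hp (by have := hw.2; omega)]
  exact hw.2

theorem mul_swap_last (hw : InXn n w) (h : w n ≤ -2) :
    InXn n (w * Equiv.swap (n : ℤ) (-n)) := by
  refine hw.mul (isSignedPerm_swap_neg (Nat.abs_cast n).le) ?_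
  have hp : w.symm 1 ≠ n := fun hp => by rw [Equiv.symm_apply_eq] at hp; omega
  rw [Equiv.symm_swap, Equiv.swap_apply_of_ne_of_ne hp (by have := hw.2; omega)]
  exact hw.2

theorem mul_swap_adjacent (hw : InXn n w) {i : ℤ} (hi : 1 ≤ i) (hin : i ≤ n - 1) :
    InXn n (w * (Equiv.swap i (i + 1) * Equiv.swap (-i) (-(i + 1)))) := by
  refine hw.mul (isSignedPerm_swap_mul_swap hi (by omega)) ?_
  have := hw.2
  simp only [Equiv.Perm.mul_def, Equiv.symm_trans_apply, Equiv.symm_swap, Equiv.swap_apply_def]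
  split_ifs <;> omega

/-- Descending induction: an entry `≤ -2` followed by a positive one is a big ascent, and `X_n`
forbids `-1` in the window. -/
theorem apply_pos_of_forall_not_lll (hw : InXn n w) (hlast : -2 < w n)
    (hasc : ∀ i : ℤ, 1 ≤ i → i ≤ n - 1 → ¬ Lll (w i) (w (i + 1))) :
    ∀ q : ℤ, q ≤ n → 1 ≤ q → 0 < w q := by
  intro q hqn
  induction q, hqn using Int.leInductionDown with
  | base =>
    intro hn
    have := hw.1.map_ne_zero (i := n) (by omega)
    have := hw.apply_ne_neg_one (i := n) (by omega)
    omega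
  | pred q hqn ih =>
    intro hq
    have := hw.1.map_ne_zero (i := q - 1) (by omega)
    have := hw.apply_ne_neg_one (i := q - 1) (by omega)
    have hwq := ih (by omega)
    by_contra hneg
    refine hasc (q - 1) hq (by omega) ⟨-1, by norm_num, by omega, ?_⟩
    rw [sub_add_cancel]
    omega

theorem apply_eq_self_of_forall_not_lll (hw : InXn n w) (h1 : w 1 ≤ 1) (hlast : -2 < w n)
    (hasc : ∀ i : ℤ, 1 ≤ i → i ≤ n - 1 → ¬ Lll (w i) (w (i + 1))) (k : ℕ) :
    ∀ q : ℤ, 1 ≤ q → q ≤ k → q ≤ n → w q = q := by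
  induction k with
  | zero => intro q hq hq0; omega
  | succ k ih =>
    intro q hq hqk hqn
    rcases lt_or_eq_of_le hqk with hlt | hqk
    · exact ih q hq (by omega) hqn
    push_cast at hqk
    subst hqk
    have hle : w (k + 1) ≤ k + 1 := by
      rcases Nat.eq_zero_or_pos k with rfl | hk
      · simpa using h1
      by_contra! hgt
      refine hasc k (by omega) (by omega) ⟨k + 1, by omega, ?_, by omega⟩
      rw [ih k (by omega) le_rfl (by omega)]
      omega
    have hpos := hw.apply_pos_of_forall_not_lll hlast hasc (k + 1) hqn hq
    by_contra hne
    exact hne (w.injective (ih (w (k + 1)) (by omega) (by omega) (by omega)))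

theorem exists_covRel_of_ne_one (hw : InXn n w) (hne : w ≠ 1) : ∃ u, covRel n u w := by
  by_cases h1 : 2 ≤ w 1
  · exact ⟨_, hw.mul_swap_one h1, hw, .inl ⟨h1, rfl⟩⟩
  by_cases hlast : w n ≤ -2
  · exact ⟨_, hw.mul_swap_last hlast, hw, .inr (.inr ⟨hlast, rfl⟩)⟩
  by_cases hasc : ∃ i : ℤ, 1 ≤ i ∧ i ≤ n - 1 ∧ Lll (w i) (w (i + 1))
  · obtain ⟨i, hi, hin, hL⟩ := hasc
    exact ⟨_, hw.mul_swap_adjacent hi hin, hw, .inr (.inl ⟨i, hi, hin, hL, rfl⟩)⟩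
  push Not at h1 hlast hasc
  exact absurd (hw.1.eq_one_of_forall_apply_eq_self fun q hq hqn =>
    hw.apply_eq_self_of_forall_not_lll (by omega) hlast hasc n q hq hqn hqn) hne

end InXn

def pairWeight (n : ℕ) (x y : ℤ) : ℤ :=
  if 0 < x then
    if 0 < y then
      if y = x + 1 then x * (x + 1) - n * (n + 1) + 1
      else if x < y then 1 else 0
    else if y = -(x + 1) then -1 else 0
  else
    if 0 < y then (if x = -(y + 1) then 0 else 1)
    else
      if y = x + 1 then 0
      else if y = x - 1 then n * (n + 1) - 1 - x * (x - 1)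
      else if x < y then 1 else 0

def entryWeight (n : ℕ) (x : ℤ) : ℤ := if 0 < x then 0 else x * x - n * (n + 1) + 1

noncomputable def xnRank (n : ℕ) (w : Equiv.Perm ℤ) : ℤ :=
  (∑ p ∈ Icc 1 (n : ℤ), ∑ q ∈ Icc 1 (n : ℤ),
      if p < q then pairWeight n (w p) (w q) else 0)
    + ∑ p ∈ Icc 1 (n : ℤ), entryWeight n (w p)

section Weights

variable {n : ℕ} {a b m : ℤ}

theorem pairWeight_swap_of_lll (h : Lll a b) : pairWeight n b a = pairWeight n a b - 1 := by
  obtain ⟨c, hc0, hac, hcb⟩ := h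
  simp only [pairWeight]
  split_ifs <;> omega

theorem pairWeight_neg_left_sub_of_neg (ha : 2 ≤ a) (hm : 1 ≤ m) (hma : m ≠ a) :
    pairWeight n (-a) (-m) - pairWeight n a (-m) =
      (if m < a - 1 then 1 else 0) + (if m = a + 1 then n * (n + 1) - a * (a + 1) else 0) := by
  simp only [pairWeight]
  split_ifs <;> first | omega | (subst_vars; ring)

theorem pairWeight_neg_left_sub (ha : 2 ≤ a) (hm : 1 ≤ m) (hma : m ≠ a) :
    pairWeight n (-a) m - pairWeight n a m =
      (if m < a - 1 then 1 else 0) + (if m = a + 1 then n * (n + 1) - a * (a + 1) else 0) := by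
  simp only [pairWeight]
  split_ifs <;> omega

theorem pairWeight_sub_neg_right_of_neg (hb : 2 ≤ b) (hm : 1 ≤ m) (hmb : m ≠ b) :
    pairWeight n (-m) b - pairWeight n (-m) (-b) =
      (if m < b - 1 then 1 else 0) + (if m = b - 1 then b * (b - 1) - n * (n + 1) + 2 else 0) := by
  simp only [pairWeight]
  split_ifs <;> first | omega | (subst_vars; ring)

theorem pairWeight_sub_neg_right (hb : 2 ≤ b) (hm : 1 ≤ m) (hmb : m ≠ b) :
    pairWeight n m b - pairWeight n m (-b) =
      (if m < b - 1 then 1 else 0) + (if m = b - 1 then b * (b - 1) - n * (n + 1) + 2 else 0) := by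
  simp only [pairWeight]
  split_ifs <;> first | omega | (subst_vars; ring)

end Weights

section LowerBound

variable {n : ℕ}

theorem neg_le_pairWeight {x : ℤ} (hx : |x| ≤ n) (y : ℤ) :
    -(n * (n + 1) + 1 : ℤ) ≤ pairWeight n x y := by
  rw [abs_le] at hx
  have h1 : 0 ≤ x * (x + 1) := by rcases le_or_gt 0 x with h | h <;> nlinarith
  have h2 : x * (x - 1) ≤ n * (n + 1) := by
    have := mul_nonneg (by omega : (0 : ℤ) ≤ n + x) (by omega : (0 : ℤ) ≤ n - x + 1)
    nlinarith
  simp only [pairWeight]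
  split_ifs <;> nlinarith

theorem neg_le_entryWeight (x : ℤ) : -(n * (n + 1) + 1 : ℤ) ≤ entryWeight n x := by
  simp only [entryWeight]
  split_ifs <;> nlinarith [mul_self_nonneg x, (by positivity : (0 : ℤ) ≤ n * (n + 1))]

theorem bddBelow_xnRank : BddBelow (xnRank n '' {w | InXn n w}) := by
  set I := Icc 1 (n : ℤ)
  set B : ℤ := -(n * (n + 1) + 1)
  refine ⟨#I • #I • B + #I • B, ?_⟩
  rintro _ ⟨w, hw, rfl⟩
  refine add_le_add (card_nsmul_le_sum _ _ _ fun p hp => card_nsmul_le_sum _ _ _ fun q _ => ?_)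
    (card_nsmul_le_sum _ _ _ fun p _ => neg_le_entryWeight _)
  split_ifs
  · exact neg_le_pairWeight (hw.1.abs_apply_le (by rw [mem_Icc] at hp; rw [abs_le]; omega)) _
  · have : (0 : ℤ) ≤ n * (n + 1) := by positivity
    omega

end LowerBound

section RankDrop

variable {n : ℕ} {u w : Equiv.Perm ℤ}

theorem xnRank_sub_of_eqOn_erase {k : ℤ} (hk : k ∈ Icc 1 (n : ℤ))
    (huw : ∀ p ∈ Icc 1 (n : ℤ), p ≠ k → u p = w p) :
    xnRank n u - xnRank n w = entryWeight n (u k) - entryWeight n (w k) +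
      ∑ q ∈ (Icc 1 (n : ℤ)).erase k,
        ((if k < q then pairWeight n (u k) (w q) - pairWeight n (w k) (w q) else 0) +
          (if q < k then pairWeight n (w q) (u k) - pairWeight n (w q) (w k) else 0)) := by
  set I := Icc 1 (n : ℤ)
  set D : ℤ → ℤ → ℤ := fun p q =>
    (if p < q then pairWeight n (u p) (u q) else 0) -
      (if p < q then pairWeight n (w p) (w q) else 0) with hD
  have hrow : ∀ p ∈ I.erase k, ∑ q ∈ I, D p q = D p k := by
    intro p hp
    refine sum_eq_single_of_mem k hk fun q hq hqk => ?_
    rw [hD]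
    dsimp only
    rw [huw p (mem_of_mem_erase hp) (ne_of_mem_erase hp), huw q hq hqk, sub_self]
  have hpairs : ∑ p ∈ I, ∑ q ∈ I, D p q = ∑ q ∈ I.erase k, (D k q + D q k) := by
    rw [← add_sum_erase I _ hk, sum_congr rfl hrow, ← add_sum_erase I _ hk, sum_add_distrib]
    simp [hD]
  have hentries : ∑ p ∈ I, (entryWeight n (u p) - entryWeight n (w p)) =
      entryWeight n (u k) - entryWeight n (w k) :=
    sum_eq_single_of_mem k hk fun p hp hpk => by rw [huw p hp hpk, sub_self]
  have hterm : ∀ q ∈ I.erase k, D k q + D q k =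
      (if k < q then pairWeight n (u k) (w q) - pairWeight n (w k) (w q) else 0) +
        (if q < k then pairWeight n (w q) (u k) - pairWeight n (w q) (w k) else 0) := by
    intro q hq
    rw [hD]
    dsimp only
    rw [huw q (mem_of_mem_erase hq) (ne_of_mem_erase hq)]
    split_ifs <;> ring
  rw [xnRank, xnRank, ← sum_congr rfl hterm, ← hpairs, ← hentries]
  simp only [hD, sum_sub_distrib]
  ring

theorem sum_erase_ite_lt_sub_one {c : ℤ} (hc : 2 ≤ c) (hcn : c ≤ n) :
    ∑ m ∈ (Icc 1 (n : ℤ)).erase c, (if m < c - 1 then (1 : ℤ) else 0) = c - 2 := by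
  have : ((Icc 1 (n : ℤ)).erase c).filter (· < c - 1) = Ico 1 (c - 1) := by
    ext m
    simp only [mem_filter, mem_erase, mem_Icc, mem_Ico]
    omega
  rw [sum_boole, this, Int.card_Ico]
  omega

theorem sum_erase_pairWeight_neg_left_sub {a : ℤ} (ha : 2 ≤ a) (han : a ≤ n) :
    ∑ m ∈ (Icc 1 (n : ℤ)).erase a, (pairWeight n (-a) m - pairWeight n a m) =
      n * (n + 1) - a ^ 2 - 2 := by
  rw [sum_congr rfl fun m hm => pairWeight_neg_left_sub ha
      (mem_Icc.1 (mem_of_mem_erase hm)).1 (ne_of_mem_erase hm),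
    sum_add_distrib, sum_erase_ite_lt_sub_one ha han, sum_ite_eq']
  -- the correction at `m = a + 1` vanishes when `a = n`
  split_ifs with h
  · ring
  · obtain rfl : a = n := by simp only [mem_erase, mem_Icc] at h; omega
    ring

theorem sum_erase_pairWeight_sub_neg_right {b : ℤ} (hb : 2 ≤ b) (hbn : b ≤ n) :
    ∑ m ∈ (Icc 1 (n : ℤ)).erase b, (pairWeight n m b - pairWeight n m (-b)) =
      b ^ 2 - n * (n + 1) := by
  rw [sum_congr rfl fun m hm => pairWeight_sub_neg_right hb
      (mem_Icc.1 (mem_of_mem_erase hm)).1 (ne_of_mem_erase hm),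
    sum_add_distrib, sum_erase_ite_lt_sub_one hb hbn, sum_ite_eq',
    if_pos (by simp only [mem_erase, mem_Icc]; omega)]
  ring

theorem xnRank_mul_swap_one (hw : InXn n w) (ha : 2 ≤ w 1) :
    xnRank n (w * Equiv.swap 1 (-1)) + 1 = xnRank n w := by
  have h1n : |(1 : ℤ)| ≤ n := hw.1.abs_le_of_apply_ne (by omega)
  have h1 : (1 : ℤ) ∈ Icc 1 (n : ℤ) := mem_Icc.2 ⟨le_rfl, by simpa using h1n⟩
  have han : w 1 ≤ n := (abs_le.1 (hw.1.abs_apply_le h1n)).2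
  have hu1 : (w * Equiv.swap 1 (-1) : Equiv.Perm ℤ) 1 = -w 1 := by
    rw [Equiv.Perm.mul_apply, Equiv.swap_apply_left, hw.1.1]
  have huw : ∀ p ∈ Icc 1 (n : ℤ), p ≠ 1 → (w * Equiv.swap 1 (-1) : Equiv.Perm ℤ) p = w p :=
    fun p hp hp1 => by
      rw [Equiv.Perm.mul_apply, Equiv.swap_apply_of_ne_of_ne hp1 (by rw [mem_Icc] at hp; omega)]
  have hsum := hw.1.sum_erase_apply (f := fun y => pairWeight n (-w 1) y - pairWeight n (w 1) y) h1
    fun m hm => by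
      rw [abs_of_pos (by omega : 0 < w 1)] at hm
      obtain ⟨hm1, hm⟩ := mem_erase.1 hm
      exact (pairWeight_neg_left_sub_of_neg ha (mem_Icc.1 hm).1 hm1).trans
        (pairWeight_neg_left_sub ha (mem_Icc.1 hm).1 hm1).symm
  rw [abs_of_pos (by omega : 0 < w 1), sum_erase_pairWeight_neg_left_sub ha han] at hsum
  have hdiff := xnRank_sub_of_eqOn_erase h1 huw
  rw [hu1, sum_congr rfl fun q hq => by
    rw [if_pos (by simp only [mem_erase, mem_Icc] at hq; omega),
      if_neg (by simp only [mem_erase, mem_Icc] at hq; omega), add_zero], hsum] at hdiff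
  simp only [entryWeight, if_pos (by omega : 0 < w 1), if_neg (by omega : ¬ 0 < -w 1)] at hdiff
  linarith

theorem xnRank_mul_swap_last (hw : InXn n w) (hb : w n ≤ -2) :
    xnRank n (w * Equiv.swap (n : ℤ) (-n)) + 1 = xnRank n w := by
  obtain ⟨b, hwb⟩ : ∃ b, w n = -b := ⟨-w n, (neg_neg _).symm⟩
  replace hb : 2 ≤ b := by omega
  have hn : (n : ℤ) ∈ Icc 1 (n : ℤ) := by
    have : (n : ℤ) ≠ 0 := fun h => by rw [h, hw.1.map_zero] at hwb; omega
    exact mem_Icc.2 ⟨by omega, le_rfl⟩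
  have hbn : b ≤ n := by
    have := abs_le.1 (hw.1.abs_apply_le (i := n) (Nat.abs_cast n).le)
    omega
  have hun : (w * Equiv.swap (n : ℤ) (-n) : Equiv.Perm ℤ) n = b := by
    rw [Equiv.Perm.mul_apply, Equiv.swap_apply_left, hw.1.1, hwb, neg_neg]
  have huw : ∀ p ∈ Icc 1 (n : ℤ), p ≠ n → (w * Equiv.swap (n : ℤ) (-n) : Equiv.Perm ℤ) p = w p :=
    fun p hp hpn => by
      rw [Equiv.Perm.mul_apply, Equiv.swap_apply_of_ne_of_ne hpn (by rw [mem_Icc] at hp; omega)]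
  have hsum := hw.1.sum_erase_apply (f := fun y => pairWeight n y b - pairWeight n y (-b)) hn
    fun m hm => by
      rw [hwb, abs_neg, abs_of_pos (by omega : 0 < b)] at hm
      obtain ⟨hm1, hm⟩ := mem_erase.1 hm
      exact (pairWeight_sub_neg_right_of_neg hb (mem_Icc.1 hm).1 hm1).trans
        (pairWeight_sub_neg_right hb (mem_Icc.1 hm).1 hm1).symm
  rw [hwb, abs_neg, abs_of_pos (by omega : 0 < b), sum_erase_pairWeight_sub_neg_right hb hbn]
    at hsum
  have hdiff := xnRank_sub_of_eqOn_erase hn huw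
  rw [hun, hwb, sum_congr rfl fun q hq => by
    rw [if_neg (by simp only [mem_erase, mem_Icc] at hq; omega),
      if_pos (by simp only [mem_erase, mem_Icc] at hq; omega), zero_add], hsum] at hdiff
  simp only [entryWeight, if_pos (by omega : 0 < b), if_neg (by omega : ¬ 0 < -b)] at hdiff
  linarith

theorem swap_add_one_lt_swap_add_one_iff {i p q : ℤ} (h : (p, q) ≠ (i, i + 1))
    (h' : (p, q) ≠ (i + 1, i)) :
    Equiv.swap i (i + 1) p < Equiv.swap i (i + 1) q ↔ p < q := by
  simp only [ne_eq, Prod.mk.injEq] at h h'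
  simp only [Equiv.swap_apply_def]
  split_ifs <;> omega

theorem sum_sum_ite_swap_lt {s : Finset ℤ} {i : ℤ} (hi : i ∈ s) (hi' : i + 1 ∈ s)
    (G : ℤ → ℤ → ℤ) :
    ∑ p ∈ s, ∑ q ∈ s, (if Equiv.swap i (i + 1) p < Equiv.swap i (i + 1) q then G p q else 0) =
      ∑ p ∈ s, ∑ q ∈ s, (if p < q then G p q else 0) + G (i + 1) i - G i (i + 1) := by
  have hchange : ∑ x ∈ s ×ˢ s,
      ((if Equiv.swap i (i + 1) x.1 < Equiv.swap i (i + 1) x.2 then G x.1 x.2 else 0) -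
        (if x.1 < x.2 then G x.1 x.2 else 0)) = G (i + 1) i - G i (i + 1) := by
    rw [sum_eq_add_of_mem (i, i + 1) (i + 1, i) (mem_product.2 ⟨hi, hi'⟩)
      (mem_product.2 ⟨hi', hi⟩) (by simp) fun x _ hx => by
        rw [if_congr (swap_add_one_lt_swap_add_one_iff hx.1 hx.2) rfl rfl, sub_self]]
    simp only [Equiv.swap_apply_left, Equiv.swap_apply_right]
    rw [if_neg (by omega), if_pos (by omega), if_pos (by omega), if_neg (by omega)]
    ring
  rw [sum_sub_distrib, sum_product, sum_product] at hchange
  linarith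

theorem xnRank_mul_swap_adjacent {i : ℤ} (hi : 1 ≤ i) (hin : i ≤ n - 1)
    (h : Lll (w i) (w (i + 1))) :
    xnRank n (w * (Equiv.swap i (i + 1) * Equiv.swap (-i) (-(i + 1)))) + 1 = xnRank n w := by
  set σ := Equiv.swap i (i + 1)
  set u : Equiv.Perm ℤ := w * (σ * Equiv.swap (-i) (-(i + 1)))
  have hu : ∀ p ∈ Icc 1 (n : ℤ), u p = w (σ p) := fun p hp => by
    rw [mem_Icc] at hp
    rw [Equiv.Perm.mul_apply, Equiv.Perm.mul_apply,
      Equiv.swap_apply_of_ne_of_ne (show p ≠ -i by omega) (show p ≠ -(i + 1) by omega)]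
  have hσ : {p | σ p ≠ p} ⊆ Icc 1 (n : ℤ) := fun p hp => by
    by_contra hpI
    rw [mem_coe, mem_Icc] at hpI
    exact hp (Equiv.swap_apply_of_ne_of_ne (by omega) (by omega))
  have hentries : ∑ p ∈ Icc 1 (n : ℤ), entryWeight n (u p) =
      ∑ p ∈ Icc 1 (n : ℤ), entryWeight n (w p) := by
    rw [sum_congr rfl fun p hp => by rw [hu p hp]]
    exact σ.sum_comp (Icc 1 (n : ℤ)) (fun p => entryWeight n (w p)) hσ
  have hpairs : ∑ p ∈ Icc 1 (n : ℤ), ∑ q ∈ Icc 1 (n : ℤ),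
      (if p < q then pairWeight n (u p) (u q) else 0) =
      ∑ p ∈ Icc 1 (n : ℤ), ∑ q ∈ Icc 1 (n : ℤ),
        (if σ p < σ q then pairWeight n (w p) (w q) else 0) := by
    rw [sum_congr rfl fun p hp => sum_congr rfl fun q hq => by rw [hu p hp, hu q hq],
      ← σ.sum_comp (Icc 1 (n : ℤ)) _ hσ]
    refine sum_congr rfl fun p _ => ?_
    rw [← σ.sum_comp (Icc 1 (n : ℤ)) _ hσ]
    simp only [σ, Equiv.swap_apply_self]
  rw [xnRank, xnRank, hpairs, hentries, sum_sum_ite_swap_lt (by rw [mem_Icc]; omega)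
    (by rw [mem_Icc]; omega), pairWeight_swap_of_lll h]
  ring

theorem xnRank_add_one_of_covRel (h : covRel n u w) :
    xnRank n u + 1 = xnRank n w := by
  obtain ⟨-, hw, ⟨ha, rfl⟩ | ⟨i, hi, hin, hL, rfl⟩ | ⟨hb, rfl⟩⟩ := h
  · exact xnRank_mul_swap_one hw ha
  · exact xnRank_mul_swap_adjacent hi hin hL
  · exact xnRank_mul_swap_last hw hb

end RankDrop

theorem covRel_poset_general (n : ℕ) :
    (∀ u w : Equiv.Perm ℤ, Relation.ReflTransGen (covRel n) u w →
      Relation.ReflTransGen (covRel n) w u → u = w) ∧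
    (∀ u w : Equiv.Perm ℤ, covRel n u w ↔
      ((Relation.ReflTransGen (covRel n) u w ∧ u ≠ w) ∧
        ¬ ∃ v : Equiv.Perm ℤ, (Relation.ReflTransGen (covRel n) u v ∧ u ≠ v) ∧
          (Relation.ReflTransGen (covRel n) v w ∧ v ≠ w))) ∧
    (∀ w : Equiv.Perm ℤ, InXn n w → Relation.ReflTransGen (covRel n) 1 w) := by
  have hcov : ∀ ⦃u w⦄, covRel n u w → xnRank n u ⋖ xnRank n w := fun u w h => by
    rw [← xnRank_add_one_of_covRel h]
    exact Order.covBy_add_one _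
  have hlt : ∀ ⦃u w⦄, covRel n u w → xnRank n u < xnRank n w := fun u w h => (hcov h).lt
  refine ⟨fun u w => Relation.ReflTransGen.antisymm_of_strictMono hlt,
    fun u w => Relation.iff_covering_of_covBy hcov, ?_⟩
  exact Relation.ReflTransGen.of_forall_exists_rel hlt bddBelow_xnRank fun w hw hne =>
    (hw.exists_covRel_of_ne_one hne).imp fun u hu => ⟨hu.1, hu⟩

/-- Theorem: `⇀` is the covering relation of a partial order on `X_n`
with minimum the identity. Let `≤` be the reflexive–transitive closure of `⇀`. Then `≤`
is antisymmetric (hence a partial order); `u ⇀ w` iff `u < w` and there is no `v` with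
`u < v < w`; and the identity is the minimum of `(X_n, ≤)`. -/
theorem covRel_poset (n : ℕ) (hn : 1 ≤ n) :
    (∀ u w : Equiv.Perm ℤ, Relation.ReflTransGen (covRel n) u w →
      Relation.ReflTransGen (covRel n) w u → u = w) ∧
    (∀ u w : Equiv.Perm ℤ, covRel n u w ↔
      ((Relation.ReflTransGen (covRel n) u w ∧ u ≠ w) ∧
        ¬ ∃ v : Equiv.Perm ℤ, (Relation.ReflTransGen (covRel n) u v ∧ u ≠ v) ∧
          (Relation.ReflTransGen (covRel n) v w ∧ v ≠ w))) ∧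
    (∀ w : Equiv.Perm ℤ, InXn n w → Relation.ReflTransGen (covRel n) 1 w) :=
  covRel_poset_general n
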